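/- For any finite normalized block basis (x_j)_{j=1}^N of T_k(d,θ) and scalars (a_j), ‖Σ_{j=1}^N a_j x_j‖ ≤ (2/θ)(Σ_{j=1}^N |a_j|^p)^{1/p}, where p satisfies dθ = d^{1/p}. -/

import Mathlib

/-- Non-decreasing list of naturals. -/
abbrev NonDec (l : List ℕ) : Prop := l.Chain' (· ≤ ·)

/-- The order `≺` on nondecreasing sequences: the empty sequence is minimal;
nonempty sequences are compared by last entry, with lexicographic tie-breaking. -/
def prec (s t : List ℕ) : Prop :=
  (s = [] ∧ t ≠ []) ∨
  (s ≠ [] ∧ t ≠ [] ∧ (s.getLast! < t.getLast! ∨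
    (s.getLast! = t.getLast! ∧ List.Lex (· < ·) s t)))

/-- The map `X̂_v`: `(m_1,…,m_l) ↦ (f_1(m_1),…,f_l(m_l))` where
`f_j(0) = n_j` and `f_j(m) = n_k + m` for `m ≥ 1`, `v = (n_1,…,n_k)`. -/
def Xhat (v s : List ℕ) : List ℕ :=
  List.zipWith (fun a b => if b = 0 then a else v.getLast! + b) (v.take s.length) s

/-- The set `X_v^max`, described by its characterization:
`w ∈ X_v^max` iff `w` is nondecreasing of the same length as `v` and either
`w_1 > n_k`, or there is `1 ≤ i ≤ k` with `(w_1,…,w_i) = (n_1,…,n_i)` and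
(if `i < k`) `w_{i+1} > n_k`. -/
def XmaxSet (v : List ℕ) : Set (List ℕ) :=
  { w | w.length = v.length ∧ NonDec w ∧
    (v.getLast! < w.headI ∨
      ∃ i, 1 ≤ i ∧ i ≤ v.length ∧ w.take i = v.take i ∧
        (i < v.length → v.getLast! < w.getD i 0)) }

/-- An `E_k`-tree: a map on `ω^{≤k}` sending nondecreasing sequences of length `≤ k`
to nondecreasing sequences of the same length, preserving `≺` and initial segments. -/
def IsEkTree (k : ℕ) (X : List ℕ → List ℕ) : Prop :=
  (∀ s, NonDec s → s.length ≤ k → NonDec (X s) ∧ (X s).length = s.length) ∧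
  (∀ s t, NonDec s → NonDec t → s.length ≤ k → t.length ≤ k →
    (prec s t → prec (X s) (X t)) ∧ (s <+: t → X s <+: X t))

/-- `E ∈ AR^k`: `E` is a finite `≺`-initial segment of the restriction to `ω^{[k]}`
of some `E_k`-tree. -/
def memAR (k : ℕ) (E : Finset (List ℕ)) : Prop :=
  ∃ X : List ℕ → List ℕ, IsEkTree k X ∧
    (∀ e ∈ E, ∃ s, NonDec s ∧ s.length = k ∧ e = X s) ∧
    (∀ s, NonDec s → s.length = k → ∀ e ∈ E, prec (X s) e → X s ∈ E)

/-- `ω^{[k]}`: nondecreasing sequences of naturals of length exactly `k`. -/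
abbrev Vec (k : ℕ) := {l : List ℕ // NonDec l ∧ l.length = k}

/-- Restriction `Ex` of a finitely supported vector to a set of coordinates. -/
noncomputable def restrict {k : ℕ} (E : Finset (Vec k)) (x : Vec k →₀ ℝ) : Vec k →₀ ℝ :=
  x.filter (fun v => v ∈ E)

/-- `A < B`: every element of `A` is `≺`-below every element of `B`. -/
def Successive {k : ℕ} (A B : Finset (Vec k)) : Prop :=
  ∀ a ∈ A, ∀ b ∈ B, prec a.1 b.1

/-- Membership in `AR^k` for finite sets of elements of `ω^{[k]}`. -/
def memARV (k : ℕ) (E : Finset (Vec k)) : Prop :=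
  memAR k (E.image Subtype.val)

/-- A `d`-admissible sequence: at most `d` many `≺`-successive members of `AR^k`. -/
def Admissible (k d : ℕ) {m : ℕ} (E : Fin m → Finset (Vec k)) : Prop :=
  m ≤ d ∧ (∀ i, memARV k (E i)) ∧ ∀ i j, i < j → Successive (E i) (E j)

/-- The nondecreasing sequence of norms `|x|_j` defining the Tsirelson-type norm:
`|x|_0 = max |x_v|`, and `|x|_{j+1}` is the max of `|x|_j` and
`θ ∑ |E_i x|_j` over admissible sequences `(E_i)_{i=1}^m`, `1 ≤ m ≤ d`. -/
noncomputable def normSeq (k d : ℕ) (θ : ℝ) : ℕ → (Vec k →₀ ℝ) → ℝ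
  | 0, x => ⨆ v, |x v|
  | j + 1, x => max (normSeq k d θ j x)
      (sSup { r | ∃ m : ℕ, 1 ≤ m ∧ ∃ E : Fin m → Finset (Vec k),
        Admissible k d E ∧ r = θ * ∑ i, normSeq k d θ j (restrict (E i) x) })

/-- The norm of `T_k(d,θ)` on finitely supported vectors. -/
noncomputable def tnorm (k d : ℕ) (θ : ℝ) (x : Vec k →₀ ℝ) : ℝ :=
  ⨆ j, normSeq k d θ j x

/-!
By induction on `j` one shows `|∑ c_i u_i|_j ≤ S(A, c)` (`dualNorm d q A c`) for every block
sequence `(u_i)_{i ∈ A}` of vectors of norm at most `1`, where `q` is the conjugate exponent of `p`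
and `S(A, c)` is the supremum of `∑_{i ∈ A} λ_A(i) |c_i| w_i` over weights `w ∈ [0,1]^A` with
`∑ w_i^q ≤ d`, with `λ_A(i) = 2` at interior points of `A` and `1` at its two ends.

For an admissible `E_1 < ⋯ < E_m`, the indices `i` with `E_r u_i ≠ 0` form a staircase of sets
`I_r`. An index that is alone in some `I_r` is paid for directly, since `θ ∑_r |E_r u_i|_j` is at
most `‖u_i‖ ≤ 1`. Every other index meets at most two of the `I_r`, at an end of each, and is then
interior to `A`; so the inductive weights `W_r` of the pieces `I_r` (lonely indices removed)
merge into `w_i = θ max_r W_r(i)` without losing anything in the pairing. As `θ^q = 1/d` and each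
lonely index frees a whole piece, `∑ w_i^q ≤ m ≤ d`. Finally Hölder gives
`S(A, c) ≤ 2 d^{1/q} ‖c‖_p = (2/θ) ‖c‖_p`.
-/

open Finset hiding restrict

theorem prec_asymm {s t : List ℕ} (h : prec s t) : ¬prec t s := by
  rcases h with ⟨rfl, -⟩ | ⟨-, ht, h⟩
  · rintro (⟨-, h⟩ | ⟨-, h, -⟩) <;> exact h rfl
  · rintro (⟨rfl, -⟩ | ⟨-, -, h'⟩)
    · exact ht rfl
    rcases h with h | ⟨he, h⟩ <;> rcases h' with h' | ⟨he', h'⟩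
    · omega
    · omega
    · omega
    · exact Std.Asymm.asymm _ _ h h'

theorem prec_irrefl (s : List ℕ) : ¬prec s s := fun h => prec_asymm h h

section Restrict

variable {k : ℕ}

theorem restrict_apply (E : Finset (Vec k)) (x : Vec k →₀ ℝ) (v : Vec k) :
    restrict E x v = if v ∈ E then x v else 0 :=
  Finsupp.filter_apply _ _ _

theorem restrict_add (E : Finset (Vec k)) (x y : Vec k →₀ ℝ) :
    restrict E (x + y) = restrict E x + restrict E y := Finsupp.filter_add

theorem restrict_smul (E : Finset (Vec k)) (c : ℝ) (x : Vec k →₀ ℝ) :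
    restrict E (c • x) = c • restrict E x := Finsupp.filter_smul

theorem restrict_sum {ι : Type*} (E : Finset (Vec k)) (s : Finset ι) (f : ι → Vec k →₀ ℝ) :
    restrict E (∑ i ∈ s, f i) = ∑ i ∈ s, restrict E (f i) := Finsupp.filter_sum s f

theorem restrict_comm (E F : Finset (Vec k)) (x : Vec k →₀ ℝ) :
    restrict E (restrict F x) = restrict F (restrict E x) := by
  ext v
  simp only [restrict_apply]
  split_ifs <;> rfl

theorem restrict_empty (x : Vec k →₀ ℝ) : restrict ∅ x = 0 := by
  ext v
  simp [restrict_apply]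

theorem support_restrict_subset (E : Finset (Vec k)) (x : Vec k →₀ ℝ) :
    (restrict E x).support ⊆ x.support := by
  rw [restrict, Finsupp.support_filter]
  exact filter_subset _ _

theorem exists_mem_apply_ne_zero_of_restrict_ne_zero {E : Finset (Vec k)} {x : Vec k →₀ ℝ}
    (h : restrict E x ≠ 0) : ∃ v ∈ E, x v ≠ 0 := by
  by_contra! hE
  refine h (Finsupp.ext fun v => ?_)
  rw [restrict_apply]
  split_ifs with hv
  exacts [hE v hv, rfl]

end Restrict

section Admissible

variable {k d m : ℕ} {E : Fin m → Finset (Vec k)}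

theorem memARV_empty : memARV k ∅ :=
  ⟨id, ⟨fun _ hs _ => ⟨hs, rfl⟩, fun _ _ _ _ _ _ => ⟨id, id⟩⟩, by simp, by simp⟩

theorem Admissible.card_filter_mem_le_one (hE : Admissible k d E) (v : Vec k) :
    #{r | v ∈ E r} ≤ 1 := by
  refine card_le_one.2 fun r hr s hs => ?_
  simp only [mem_filter, mem_univ, true_and] at hr hs
  by_contra hne
  rcases lt_or_gt_of_ne hne with h | h
  · exact prec_irrefl _ (hE.2.2 r s h v hr v hs)
  · exact prec_irrefl _ (hE.2.2 s r h v hs v hr)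

theorem Admissible.ite_mem (hE : Admissible k d E) (R : Finset (Fin m)) :
    Admissible k d fun r => if r ∈ R then E r else ∅ := by
  refine ⟨hE.1, fun r => ?_, fun r s hrs => ?_⟩ <;> dsimp only
  · split_ifs
    exacts [hE.2.1 r, memARV_empty]
  · split_ifs <;> first | exact hE.2.2 r s hrs | simp [Successive]

end Admissible

section L1Norm

variable {k d m : ℕ}

noncomputable def l1Norm (x : Vec k →₀ ℝ) : ℝ := ∑ v ∈ x.support, |x v|

theorem l1Norm_nonneg (x : Vec k →₀ ℝ) : 0 ≤ l1Norm x :=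
  sum_nonneg fun _ _ => abs_nonneg _

theorem l1Norm_zero : l1Norm (0 : Vec k →₀ ℝ) = 0 := by simp [l1Norm]

theorem abs_apply_le_l1Norm (x : Vec k →₀ ℝ) (v : Vec k) : |x v| ≤ l1Norm x := by
  by_cases hv : v ∈ x.support
  · exact single_le_sum (f := fun v => |x v|) (fun _ _ => abs_nonneg _) hv
  · simpa [Finsupp.notMem_support_iff.1 hv] using l1Norm_nonneg x

theorem bddAbove_range_abs_apply (x : Vec k →₀ ℝ) : BddAbove (Set.range fun v => |x v|) :=
  ⟨l1Norm x, by rintro _ ⟨v, rfl⟩; exact abs_apply_le_l1Norm x v⟩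

theorem l1Norm_restrict (E : Finset (Vec k)) (x : Vec k →₀ ℝ) :
    l1Norm (restrict E x) = ∑ v ∈ x.support, if v ∈ E then |x v| else 0 := by
  rw [l1Norm, sum_subset (support_restrict_subset E x) fun v _ hv => by
    rw [Finsupp.notMem_support_iff.1 hv, abs_zero]]
  refine sum_congr rfl fun v _ => ?_
  rw [restrict_apply]
  split_ifs <;> simp

theorem sum_l1Norm_restrict_le {E : Fin m → Finset (Vec k)} (hE : Admissible k d E)
    (x : Vec k →₀ ℝ) : ∑ r, l1Norm (restrict (E r) x) ≤ l1Norm x := by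
  simp_rw [l1Norm_restrict]
  rw [sum_comm]
  refine sum_le_sum fun v _ => ?_
  rw [← sum_filter, sum_const, nsmul_eq_mul]
  exact mul_le_of_le_one_left (abs_nonneg _) (by exact_mod_cast hE.card_filter_mem_le_one v)

end L1Norm

section NormSeq

variable {k d m : ℕ} {θ : ℝ}

theorem normSeq_nonneg (j : ℕ) (x : Vec k →₀ ℝ) : 0 ≤ normSeq k d θ j x := by
  induction j with
  | zero => exact Real.iSup_nonneg fun v => abs_nonneg _
  | succ j ih => exact ih.trans (le_max_left _ _)

theorem normSeq_le_succ (j : ℕ) (x : Vec k →₀ ℝ) :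
    normSeq k d θ j x ≤ normSeq k d θ (j + 1) x :=
  le_max_left _ _

theorem normSeq_succ_le {j : ℕ} {x : Vec k →₀ ℝ} {b : ℝ} (h₀ : normSeq k d θ j x ≤ b)
    (h : ∀ (m : ℕ) (E : Fin m → Finset (Vec k)), 1 ≤ m → Admissible k d E →
      θ * ∑ r, normSeq k d θ j (restrict (E r) x) ≤ b) :
    normSeq k d θ (j + 1) x ≤ b :=
  max_le h₀ <| Real.sSup_le (by rintro _ ⟨m, hm, E, hE, rfl⟩; exact h m E hm hE)
    ((normSeq_nonneg j x).trans h₀)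

theorem mul_sum_l1Norm_restrict_le (hθ1 : θ ≤ 1) {E : Fin m → Finset (Vec k)}
    (hE : Admissible k d E) (x : Vec k →₀ ℝ) :
    θ * ∑ r, l1Norm (restrict (E r) x) ≤ l1Norm x :=
  (mul_le_of_le_one_left (sum_nonneg fun _ _ => l1Norm_nonneg _) hθ1).trans
    (sum_l1Norm_restrict_le hE x)

theorem normSeq_le_l1Norm (hθ0 : 0 ≤ θ) (hθ1 : θ ≤ 1) (j : ℕ) (x : Vec k →₀ ℝ) :
    normSeq k d θ j x ≤ l1Norm x := by
  induction j generalizing x with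
  | zero => exact Real.iSup_le (abs_apply_le_l1Norm x) (l1Norm_nonneg x)
  | succ j ih =>
    refine normSeq_succ_le (ih x) fun m E _ hE => ?_
    exact (mul_le_mul_of_nonneg_left (sum_le_sum fun r _ => ih _) hθ0).trans
      (mul_sum_l1Norm_restrict_le hθ1 hE x)

theorem normSeq_zero_right (hθ0 : 0 ≤ θ) (hθ1 : θ ≤ 1) (j : ℕ) :
    normSeq k d θ j 0 = 0 :=
  le_antisymm (l1Norm_zero (k := k) ▸ normSeq_le_l1Norm hθ0 hθ1 j 0) (normSeq_nonneg j 0)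

theorem mul_sum_normSeq_restrict_le (hθ0 : 0 ≤ θ) (hθ1 : θ ≤ 1) {j : ℕ}
    {E : Fin m → Finset (Vec k)} (hm : 1 ≤ m) (hE : Admissible k d E) (x : Vec k →₀ ℝ) :
    θ * ∑ r, normSeq k d θ j (restrict (E r) x) ≤ normSeq k d θ (j + 1) x := by
  have hbdd : BddAbove {t | ∃ m : ℕ, 1 ≤ m ∧ ∃ E : Fin m → Finset (Vec k),
      Admissible k d E ∧ t = θ * ∑ r, normSeq k d θ j (restrict (E r) x)} := by
    refine ⟨l1Norm x, ?_⟩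
    rintro _ ⟨m, -, E, hE, rfl⟩
    exact (mul_le_mul_of_nonneg_left (sum_le_sum fun r _ => normSeq_le_l1Norm hθ0 hθ1 j _)
      hθ0).trans (mul_sum_l1Norm_restrict_le hθ1 hE x)
  exact (le_csSup hbdd ⟨m, hm, E, hE, rfl⟩).trans (le_max_right _ _)

theorem mul_subfamily_sum_normSeq_restrict_le (hθ0 : 0 ≤ θ) (hθ1 : θ ≤ 1) {j : ℕ}
    {E : Fin m → Finset (Vec k)} (hE : Admissible k d E) (R : Finset (Fin m))
    (x : Vec k →₀ ℝ) :
    θ * ∑ r ∈ R, normSeq k d θ j (restrict (E r) x) ≤ normSeq k d θ (j + 1) x := by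
  rcases Nat.eq_zero_or_pos m with rfl | hm
  · rw [eq_empty_of_isEmpty R, sum_empty, mul_zero]
    exact normSeq_nonneg _ _
  convert mul_sum_normSeq_restrict_le hθ0 hθ1 hm (hE.ite_mem R) x using 2
  simp only [apply_ite (restrict · x), apply_ite (normSeq k d θ j), restrict_empty,
    normSeq_zero_right hθ0 hθ1, sum_ite_mem, univ_inter]

theorem normSeq_add_le (hθ0 : 0 ≤ θ) (hθ1 : θ ≤ 1) (j : ℕ) (x y : Vec k →₀ ℝ) :
    normSeq k d θ j (x + y) ≤ normSeq k d θ j x + normSeq k d θ j y := by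
  induction j generalizing x y with
  | zero =>
    refine Real.iSup_le (fun v => (abs_add_le _ _).trans (add_le_add ?_ ?_))
      (add_nonneg (normSeq_nonneg 0 x) (normSeq_nonneg 0 y))
    exacts [le_ciSup (bddAbove_range_abs_apply x) v, le_ciSup (bddAbove_range_abs_apply y) v]
  | succ j ih =>
    refine normSeq_succ_le ((ih x y).trans (add_le_add (normSeq_le_succ j x)
      (normSeq_le_succ j y))) fun m E hm hE => ?_
    calc θ * ∑ r, normSeq k d θ j (restrict (E r) (x + y))
        ≤ θ * ∑ r, (normSeq k d θ j (restrict (E r) x) + normSeq k d θ j (restrict (E r) y)) := by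
          gcongr with r
          rw [restrict_add]
          exact ih _ _
      _ = θ * ∑ r, normSeq k d θ j (restrict (E r) x) +
          θ * ∑ r, normSeq k d θ j (restrict (E r) y) := by rw [sum_add_distrib, mul_add]
      _ ≤ _ := add_le_add (mul_sum_normSeq_restrict_le hθ0 hθ1 hm hE x)
          (mul_sum_normSeq_restrict_le hθ0 hθ1 hm hE y)

theorem normSeq_smul_le (hθ0 : 0 ≤ θ) (hθ1 : θ ≤ 1) (j : ℕ) (c : ℝ) (x : Vec k →₀ ℝ) :
    normSeq k d θ j (c • x) ≤ |c| * normSeq k d θ j x := by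
  induction j generalizing x with
  | zero =>
    refine Real.iSup_le (fun v => ?_) (mul_nonneg (abs_nonneg c) (normSeq_nonneg 0 x))
    rw [Finsupp.smul_apply, smul_eq_mul, abs_mul]
    exact mul_le_mul_of_nonneg_left (le_ciSup (bddAbove_range_abs_apply x) v) (abs_nonneg c)
  | succ j ih =>
    refine normSeq_succ_le ((ih x).trans (mul_le_mul_of_nonneg_left (normSeq_le_succ j x)
      (abs_nonneg c))) fun m E hm hE => ?_
    calc θ * ∑ r, normSeq k d θ j (restrict (E r) (c • x))
        ≤ θ * ∑ r, |c| * normSeq k d θ j (restrict (E r) x) := by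
          gcongr with r
          rw [restrict_smul]
          exact ih _
      _ = |c| * (θ * ∑ r, normSeq k d θ j (restrict (E r) x)) := by
          rw [← mul_sum, mul_left_comm]
      _ ≤ _ := mul_le_mul_of_nonneg_left (mul_sum_normSeq_restrict_le hθ0 hθ1 hm hE x)
          (abs_nonneg c)

theorem normSeq_restrict_le (hθ0 : 0 ≤ θ) (hθ1 : θ ≤ 1) (j : ℕ) (F : Finset (Vec k))
    (x : Vec k →₀ ℝ) : normSeq k d θ j (restrict F x) ≤ normSeq k d θ j x := by
  induction j generalizing x with
  | zero =>
    refine Real.iSup_le (fun v => ?_) (normSeq_nonneg 0 x)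
    refine le_trans ?_ (le_ciSup (bddAbove_range_abs_apply x) v)
    rw [restrict_apply]
    split_ifs <;> simp
  | succ j ih =>
    refine normSeq_succ_le ((ih x).trans (normSeq_le_succ j x)) fun m E hm hE => ?_
    refine le_trans ?_ (mul_sum_normSeq_restrict_le hθ0 hθ1 hm hE x)
    gcongr with r
    rw [restrict_comm]
    exact ih _

theorem normSeq_sum_le (hθ0 : 0 ≤ θ) (hθ1 : θ ≤ 1) (j : ℕ) {ι : Type*} (s : Finset ι)
    (y : ι → Vec k →₀ ℝ) :
    normSeq k d θ j (∑ i ∈ s, y i) ≤ ∑ i ∈ s, normSeq k d θ j (y i) :=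
  le_sum_of_subadditive _ (normSeq_zero_right hθ0 hθ1 j).le (normSeq_add_le hθ0 hθ1 j) s y

theorem bddAbove_range_normSeq (hθ0 : 0 ≤ θ) (hθ1 : θ ≤ 1) (x : Vec k →₀ ℝ) :
    BddAbove (Set.range fun j => normSeq k d θ j x) :=
  ⟨l1Norm x, by rintro _ ⟨j, rfl⟩; exact normSeq_le_l1Norm hθ0 hθ1 j x⟩

theorem normSeq_le_tnorm (hθ0 : 0 ≤ θ) (hθ1 : θ ≤ 1) (j : ℕ) (x : Vec k →₀ ℝ) :
    normSeq k d θ j x ≤ tnorm k d θ x :=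
  le_ciSup (bddAbove_range_normSeq hθ0 hθ1 x) j

theorem abs_apply_le_tnorm (hθ0 : 0 ≤ θ) (hθ1 : θ ≤ 1) (x : Vec k →₀ ℝ) (v : Vec k) :
    |x v| ≤ tnorm k d θ x :=
  (le_ciSup (bddAbove_range_abs_apply x) v).trans (normSeq_le_tnorm hθ0 hθ1 0 x)

theorem tnorm_restrict_le (hθ0 : 0 ≤ θ) (hθ1 : θ ≤ 1) (F : Finset (Vec k))
    (x : Vec k →₀ ℝ) : tnorm k d θ (restrict F x) ≤ tnorm k d θ x :=
  ciSup_le fun j => (normSeq_restrict_le hθ0 hθ1 j F x).trans (normSeq_le_tnorm hθ0 hθ1 j x)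

end NormSeq

section Weights

variable {ι : Type*} [LinearOrder ι]

def interiorWeight (A : Finset ι) (i : ι) : ℝ :=
  if (∃ a ∈ A, a < i) ∧ ∃ b ∈ A, i < b then 2 else 1

theorem one_le_interiorWeight (A : Finset ι) (i : ι) : 1 ≤ interiorWeight A i := by
  unfold interiorWeight; split_ifs <;> norm_num

theorem interiorWeight_le_two (A : Finset ι) (i : ι) : interiorWeight A i ≤ 2 := by
  unfold interiorWeight; split_ifs <;> norm_num

theorem interiorWeight_pos (A : Finset ι) (i : ι) : 0 < interiorWeight A i :=
  one_pos.trans_le (one_le_interiorWeight A i)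

theorem interiorWeight_mono {A B : Finset ι} (h : B ⊆ A) (i : ι) :
    interiorWeight B i ≤ interiorWeight A i := by
  unfold interiorWeight
  split_ifs with hB hA
  · rfl
  · exact absurd (hB.imp (fun ⟨a, ha, hai⟩ => ⟨a, h ha, hai⟩) fun ⟨b, hb, hib⟩ => ⟨b, h hb, hib⟩) hA
  · norm_num
  · rfl

theorem interiorWeight_eq_one {A : Finset ι} {i : ι}
    (h : (∀ a ∈ A, a ≤ i) ∨ ∀ b ∈ A, i ≤ b) : interiorWeight A i = 1 := by
  rw [interiorWeight, if_neg]
  rintro ⟨⟨a, ha, hai⟩, b, hb, hib⟩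
  rcases h with h | h
  exacts [(h b hb).not_gt hib, (h a ha).not_gt hai]

theorem interiorWeight_eq_two {A : Finset ι} {i a b : ι} (ha : a ∈ A) (hai : a < i)
    (hb : b ∈ A) (hib : i < b) : interiorWeight A i = 2 :=
  if_pos ⟨⟨a, ha, hai⟩, b, hb, hib⟩

end Weights

section Staircase

variable {ι : Type*} [LinearOrder ι] {m : ℕ}

def hits (I : Fin m → Finset ι) (i : ι) : Finset (Fin m) := {r | i ∈ I r}

@[simp]
theorem mem_hits {I : Fin m → Finset ι} {i : ι} {r : Fin m} : r ∈ hits I i ↔ i ∈ I r := by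
  simp [hits]

def IsStaircase (I : Fin m → Finset ι) : Prop :=
  ∀ ⦃r s⦄, r < s → ∀ i ∈ I r, ∀ i' ∈ I s, i ≤ i'

def soloIndices (A : Finset ι) (I : Fin m → Finset ι) : Finset ι := {i ∈ A | ∃ r, I r = {i}}

theorem sum_sum_inter_eq_sum_sum_hits {M : Type*} [AddCommMonoid M] (I : Fin m → Finset ι)
    (B : Finset ι) (f : Fin m → ι → M) :
    ∑ r, ∑ i ∈ I r ∩ B, f r i = ∑ i ∈ B, ∑ r ∈ hits I i, f r i :=
  sum_comm' fun r i => by simp [and_comm]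

theorem card_filter_nonempty_sdiff_add_card_soloIndices_le (A : Finset ι)
    (I : Fin m → Finset ι) :
    #{r | (I r \ soloIndices A I).Nonempty} + #(soloIndices A I) ≤ m := by
  set G := soloIndices A I
  have hG : #G ≤ #{r | ¬(I r \ G).Nonempty} := by
    refine card_le_card_of_forall_subsingleton (fun i r => I r = {i}) (fun i hi => ?_)
      fun r _ i hi i' hi' => singleton_injective (hi.2.symm.trans hi'.2)
    obtain ⟨r, hr⟩ := (mem_filter.1 hi).2
    refine ⟨r, ?_, hr⟩
    simp [hr, hi]
  have hsplit := card_filter_add_card_filter_not (s := (univ : Finset (Fin m)))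
    fun r => (I r \ G).Nonempty
  rw [card_univ, Fintype.card_fin] at hsplit
  omega

theorem IsStaircase.eq_of_lt_of_lt {I : Fin m → Finset ι} (hI : IsStaircase I)
    {r s t : Fin m} (hrt : r < t) (hts : t < s) {i i' : ι} (hr : i ∈ I r) (hs : i ∈ I s)
    (ht : i' ∈ I t) : i' = i :=
  le_antisymm (hI hts i' ht i hs) (hI hrt i hr i' ht)

/-- An index in no singleton piece meets at most two pieces; if it meets two, it is an end of both
and interior to `A`. -/
theorem IsStaircase.sum_interiorWeight_hits_le {I : Fin m → Finset ι} (hI : IsStaircase I)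
    {A : Finset ι} (hIA : ∀ r, I r ⊆ A) {i : ι} (hi : ∀ r, I r ≠ {i}) :
    ∑ r ∈ hits I i, interiorWeight (I r) i ≤ interiorWeight A i := by
  rcases (hits I i).eq_empty_or_nonempty with hemp | hne
  · rw [hemp, sum_empty]
    exact (interiorWeight_pos A i).le
  rcases le_or_gt #(hits I i) 1 with hcard | hcard
  · obtain ⟨r, hr⟩ := card_eq_one.1 (le_antisymm hcard (card_pos.2 hne))
    rw [hr, sum_singleton]
    exact interiorWeight_mono (hIA r) i
  set r₀ := (hits I i).min' hne
  set s₀ := (hits I i).max' hne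
  have hr₀ : i ∈ I r₀ := mem_hits.1 (min'_mem _ hne)
  have hs₀ : i ∈ I s₀ := mem_hits.1 (max'_mem _ hne)
  have hlt : r₀ < s₀ := min'_lt_max'_of_card _ hcard
  have hsub : hits I i ⊆ {r₀, s₀} := by
    intro t ht
    by_contra hts
    simp only [mem_insert, mem_singleton, not_or] at hts
    refine hi t (eq_singleton_iff_unique_mem.2 ⟨mem_hits.1 ht, fun i' hi' => ?_⟩)
    exact hI.eq_of_lt_of_lt (lt_of_le_of_ne (min'_le _ _ ht) (Ne.symm hts.1))
      (lt_of_le_of_ne (le_max' _ _ ht) hts.2) hr₀ hs₀ hi'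
  have hextreme : ∀ r ∈ hits I i, interiorWeight (I r) i = 1 := by
    intro r hr
    rcases (le_max' _ r hr).lt_or_eq with h | h
    · exact interiorWeight_eq_one (Or.inl fun a ha => hI h a ha i hs₀)
    · rw [h]
      exact interiorWeight_eq_one (Or.inr fun b hb => hI hlt i hr₀ b hb)
  have hA : interiorWeight A i = 2 := by
    obtain ⟨a, ha, hai⟩ := ((nontrivial_iff_ne_singleton hr₀).2 (hi r₀)).exists_ne i
    obtain ⟨b, hb, hbi⟩ := ((nontrivial_iff_ne_singleton hs₀).2 (hi s₀)).exists_ne i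
    exact interiorWeight_eq_two (hIA _ ha) (lt_of_le_of_ne (hI hlt a ha i hs₀) hai)
      (hIA _ hb) (lt_of_le_of_ne (hI hlt i hr₀ b hb) (Ne.symm hbi))
  rw [sum_congr rfl hextreme, hA, sum_const, nsmul_one]
  exact_mod_cast (card_le_card hsub).trans card_le_two

end Staircase

section DualNorm

variable {ι : Type*}

def dualBall (d : ℕ) (q : ℝ) (A : Finset ι) : Set (ι → ℝ) :=
  {w | (∀ i, w i ∈ Set.Icc 0 1) ∧ ∑ i ∈ A, w i ^ q ≤ d}

theorem zero_mem_dualBall {d : ℕ} {q : ℝ} {A : Finset ι} (hq : q ≠ 0) :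
    (0 : ι → ℝ) ∈ dualBall d q A :=
  ⟨fun _ => ⟨le_rfl, zero_le_one⟩, by simp [Real.zero_rpow hq]⟩

variable [LinearOrder ι]

def weightedPairing (A : Finset ι) (c w : ι → ℝ) : ℝ :=
  ∑ i ∈ A, interiorWeight A i * |c i| * w i

noncomputable def dualNorm (d : ℕ) (q : ℝ) (A : Finset ι) (c : ι → ℝ) : ℝ :=
  sSup (weightedPairing A c '' dualBall d q A)

variable {d : ℕ} {q : ℝ} {A : Finset ι} {c : ι → ℝ}

theorem bddAbove_weightedPairing_image :
    BddAbove (weightedPairing A c '' dualBall d q A) := by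
  refine ⟨∑ i ∈ A, 2 * |c i|, ?_⟩
  rintro _ ⟨w, hw, rfl⟩
  refine sum_le_sum fun i _ => ?_
  calc interiorWeight A i * |c i| * w i ≤ interiorWeight A i * |c i| * 1 :=
        mul_le_mul_of_nonneg_left (hw.1 i).2 (mul_nonneg (interiorWeight_pos A i).le (abs_nonneg _))
    _ ≤ 2 * |c i| := by
        rw [mul_one]
        exact mul_le_mul_of_nonneg_right (interiorWeight_le_two A i) (abs_nonneg _)

theorem weightedPairing_le_dualNorm {w : ι → ℝ} (hw : w ∈ dualBall d q A) :
    weightedPairing A c w ≤ dualNorm d q A c :=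
  le_csSup bddAbove_weightedPairing_image ⟨w, hw, rfl⟩

theorem dualNorm_nonneg (hq : q ≠ 0) : 0 ≤ dualNorm d q A c := by
  simpa [weightedPairing] using weightedPairing_le_dualNorm (c := c) (zero_mem_dualBall hq)

theorem exists_mem_dualBall_dualNorm_le (hq : q ≠ 0) {ε : ℝ} (hε : 0 < ε) :
    ∃ w ∈ dualBall d q A, dualNorm d q A c ≤ weightedPairing A c w + ε := by
  obtain ⟨_, ⟨w, hw, rfl⟩, hlt⟩ := exists_lt_of_lt_csSup
    (Set.Nonempty.image _ ⟨0, zero_mem_dualBall hq⟩) (sub_lt_self (dualNorm d q A c) hε)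
  exact ⟨w, hw, by linarith⟩

theorem abs_le_dualNorm (hq : q ≠ 0) (hd : 1 ≤ d) {i : ι} (hi : i ∈ A) :
    |c i| ≤ dualNorm d q A c := by
  classical
  have hw : Pi.single i 1 ∈ dualBall d q A := by
    refine ⟨fun a => ?_, ?_⟩
    · rcases eq_or_ne a i with rfl | ha <;> simp [*]
    · rw [sum_eq_single_of_mem i hi fun a _ ha => by simp [ha, Real.zero_rpow hq]]
      simpa using hd
  refine le_trans ?_ (weightedPairing_le_dualNorm (c := c) hw)
  rw [weightedPairing, sum_eq_single_of_mem i hi fun a _ ha => by simp [ha]]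
  simpa using le_mul_of_one_le_left (abs_nonneg _) (one_le_interiorWeight A i)

theorem dualNorm_le {p : ℝ} (hpq : p.HolderConjugate q) (A : Finset ι) (c : ι → ℝ) :
    dualNorm d q A c ≤ 2 * (d : ℝ) ^ (1 / q) * (∑ i ∈ A, |c i| ^ p) ^ (1 / p) := by
  have hcp : 0 ≤ (∑ i ∈ A, |c i| ^ p) ^ (1 / p) := by positivity
  refine Real.sSup_le ?_ (by positivity)
  rintro _ ⟨w, hw, rfl⟩
  have hwq : (∑ i ∈ A, |w i| ^ q) ^ (1 / q) ≤ (d : ℝ) ^ (1 / q) := by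
    simp_rw [abs_of_nonneg (hw.1 _).1]
    exact Real.rpow_le_rpow (sum_nonneg fun i _ => Real.rpow_nonneg (hw.1 i).1 q) hw.2
      (by have := hpq.symm.pos; positivity)
  calc weightedPairing A c w ≤ 2 * ∑ i ∈ A, |c i| * w i := by
        rw [weightedPairing, mul_sum]
        refine sum_le_sum fun i _ => ?_
        rw [mul_assoc]
        exact mul_le_mul_of_nonneg_right (interiorWeight_le_two A i)
          (mul_nonneg (abs_nonneg _) (hw.1 i).1)
    _ ≤ 2 * ((∑ i ∈ A, |c i| ^ p) ^ (1 / p) * (∑ i ∈ A, |w i| ^ q) ^ (1 / q)) := by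
        gcongr
        simpa only [abs_abs] using Real.inner_le_Lp_mul_Lq A (fun i => |c i|) w hpq
    _ ≤ 2 * ((∑ i ∈ A, |c i| ^ p) ^ (1 / p) * (d : ℝ) ^ (1 / q)) := by gcongr
    _ = 2 * (d : ℝ) ^ (1 / q) * (∑ i ∈ A, |c i| ^ p) ^ (1 / p) := by ring

end DualNorm

section Merge

variable {ι : Type*} [LinearOrder ι] {m d : ℕ} {q θ : ℝ}

theorem fold_max_mem_Icc {α : Type*} (s : Finset α) {f : α → ℝ} (hf : ∀ a ∈ s, f a ∈ Set.Icc 0 1) :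
    s.fold max 0 f ∈ Set.Icc 0 1 :=
  ⟨(le_fold_max 0).2 (Or.inl le_rfl), (fold_max_le 1).2 ⟨zero_le_one, fun a ha => (hf a ha).2⟩⟩

theorem fold_max_rpow_le_sum {α : Type*} (s : Finset α) {f : α → ℝ} (hf : ∀ a ∈ s, 0 ≤ f a)
    (hq : 0 < q) : s.fold max 0 f ^ q ≤ ∑ a ∈ s, f a ^ q := by
  have hpow : ∀ a ∈ s, 0 ≤ f a ^ q := fun a ha => Real.rpow_nonneg (hf a ha) q
  rcases (le_fold_max (s.fold max 0 f)).1 le_rfl with h | ⟨a, ha, h⟩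
  · rw [le_antisymm h ((le_fold_max 0).2 (Or.inl le_rfl)), Real.zero_rpow hq.ne']
    exact sum_nonneg hpow
  · exact (Real.rpow_le_rpow ((le_fold_max 0).2 (Or.inl le_rfl)) h hq.le).trans
      (single_le_sum hpow ha)

/-- The weight `(interiorWeight A i)⁻¹` of a solo index makes its term in the pairing `|c i|`. -/
noncomputable def mergedWeight (θ : ℝ) (A : Finset ι) (I : Fin m → Finset ι)
    (W : Fin m → ι → ℝ) (i : ι) : ℝ :=
  if i ∈ soloIndices A I then (interiorWeight A i)⁻¹ else θ * (hits I i).fold max 0 (W · i)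

variable {A : Finset ι} {I : Fin m → Finset ι} {W : Fin m → ι → ℝ}

theorem sum_mergedWeight_rpow_sdiff_le (hθ0 : 0 ≤ θ) (hq : 0 < q) (hθq : θ ^ q = (d : ℝ)⁻¹)
    (hIA : ∀ r, I r ⊆ A) (hW : ∀ r, W r ∈ dualBall d q (I r \ soloIndices A I)) :
    ∑ i ∈ A \ soloIndices A I, mergedWeight θ A I W i ^ q ≤
      #{r | (I r \ soloIndices A I).Nonempty} := by
  set G := soloIndices A I
  calc ∑ i ∈ A \ G, mergedWeight θ A I W i ^ q
      = ∑ i ∈ A \ G, θ ^ q * (hits I i).fold max 0 (W · i) ^ q :=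
        sum_congr rfl fun i hi => by
          rw [mergedWeight, if_neg (mem_sdiff.1 hi).2, Real.mul_rpow hθ0
            (fold_max_mem_Icc _ fun r _ => (hW r).1 i).1]
    _ ≤ ∑ i ∈ A \ G, (d : ℝ)⁻¹ * ∑ r ∈ hits I i, W r i ^ q := by
        rw [hθq]
        gcongr with i
        exact fold_max_rpow_le_sum _ (fun r _ => ((hW r).1 i).1) hq
    _ = (d : ℝ)⁻¹ * ∑ r, ∑ i ∈ I r \ G, W r i ^ q := by
        rw [← mul_sum, ← sum_sum_inter_eq_sum_sum_hits]
        congr! 2 with r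
        rw [← inter_sdiff_assoc, inter_eq_left.2 (hIA r)]
    _ ≤ (d : ℝ)⁻¹ * ∑ r, if (I r \ G).Nonempty then (d : ℝ) else 0 := by
        gcongr with r
        split_ifs with hne
        · exact (hW r).2
        · rw [not_nonempty_iff_eq_empty.1 hne, sum_empty]
    _ ≤ #{r | (I r \ G).Nonempty} := by
        rw [← sum_filter, sum_const, nsmul_eq_mul]
        rcases Nat.eq_zero_or_pos d with rfl | hd
        · simp
        · rw [mul_left_comm, inv_mul_cancel₀ (by positivity), mul_one]

theorem mergedWeight_mem_dualBall (hθ0 : 0 ≤ θ) (hθ1 : θ ≤ 1) (hq : 0 < q)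
    (hθq : θ ^ q = (d : ℝ)⁻¹) (hmd : m ≤ d) (hIA : ∀ r, I r ⊆ A)
    (hW : ∀ r, W r ∈ dualBall d q (I r \ soloIndices A I)) :
    mergedWeight θ A I W ∈ dualBall d q A := by
  have hw : ∀ i, mergedWeight θ A I W i ∈ Set.Icc 0 1 := by
    intro i
    have hM := fold_max_mem_Icc (hits I i) fun r _ => (hW r).1 i
    unfold mergedWeight
    split_ifs
    · exact ⟨inv_nonneg.2 (interiorWeight_pos A i).le,
        inv_le_one_of_one_le₀ (one_le_interiorWeight A i)⟩
    · exact ⟨mul_nonneg hθ0 hM.1, mul_le_one₀ hθ1 hM.1 hM.2⟩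
  have hsolo : ∑ i ∈ A ∩ soloIndices A I, mergedWeight θ A I W i ^ q ≤ #(soloIndices A I) := by
    refine (sum_le_card_nsmul _ _ 1 fun i _ => Real.rpow_le_one (hw i).1 (hw i).2 hq.le).trans ?_
    rw [nsmul_one]
    exact_mod_cast card_le_card inter_subset_right
  refine ⟨hw, ?_⟩
  rw [← sum_inter_add_sum_sdiff A (soloIndices A I)]
  refine (add_le_add hsolo (sum_mergedWeight_rpow_sdiff_le hθ0 hq hθq hIA hW)).trans ?_
  exact_mod_cast (add_comm (#(soloIndices A I)) _ ▸
    card_filter_nonempty_sdiff_add_card_soloIndices_le A I).trans hmd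

theorem sum_hits_interiorWeight_mul_le (hI : IsStaircase I) (hIA : ∀ r, I r ⊆ A)
    (hW : ∀ r i, 0 ≤ W r i) (c : ι → ℝ) {i : ι} (hi : i ∈ A \ soloIndices A I) :
    ∑ r ∈ hits I i, interiorWeight (I r \ soloIndices A I) i * |c i| * W r i ≤
      interiorWeight A i * |c i| * (hits I i).fold max 0 (W · i) := by
  have hsingle : ∀ r, I r ≠ {i} := fun r h =>
    (mem_sdiff.1 hi).2 (mem_filter.2 ⟨(mem_sdiff.1 hi).1, r, h⟩)
  have hM0 : 0 ≤ |c i| * (hits I i).fold max 0 (W · i) :=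
    mul_nonneg (abs_nonneg _) ((le_fold_max 0).2 (Or.inl le_rfl))
  calc ∑ r ∈ hits I i, interiorWeight (I r \ soloIndices A I) i * |c i| * W r i
      ≤ ∑ r ∈ hits I i, interiorWeight (I r) i * (|c i| * (hits I i).fold max 0 (W · i)) := by
        refine sum_le_sum fun r hr => ?_
        rw [mul_assoc]
        exact mul_le_mul (interiorWeight_mono sdiff_subset i)
          (mul_le_mul_of_nonneg_left ((le_fold_max _).2 (Or.inr ⟨r, hr, le_rfl⟩)) (abs_nonneg _))
          (mul_nonneg (abs_nonneg _) (hW r i)) (interiorWeight_pos _ i).le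
    _ ≤ interiorWeight A i * (|c i| * (hits I i).fold max 0 (W · i)) := by
        rw [← sum_mul]
        exact mul_le_mul_of_nonneg_right (hI.sum_interiorWeight_hits_le hIA hsingle) hM0
    _ = interiorWeight A i * |c i| * (hits I i).fold max 0 (W · i) := by ring

theorem mul_sum_weightedPairing_add_le (hθ0 : 0 ≤ θ) (hI : IsStaircase I) (hIA : ∀ r, I r ⊆ A)
    (hW : ∀ r i, 0 ≤ W r i) (c : ι → ℝ) :
    θ * ∑ r, weightedPairing (I r \ soloIndices A I) c (W r) + ∑ i ∈ soloIndices A I, |c i| ≤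
      weightedPairing A c (mergedWeight θ A I W) := by
  set G := soloIndices A I
  have hsolo : ∑ i ∈ G, |c i| =
      ∑ i ∈ A ∩ G, interiorWeight A i * |c i| * mergedWeight θ A I W i := by
    rw [inter_eq_right.2 (show G ⊆ A from filter_subset _ _)]
    refine sum_congr rfl fun i hi => ?_
    rw [mergedWeight, if_pos hi, mul_right_comm, mul_inv_cancel₀ (interiorWeight_pos A i).ne',
      one_mul]
  have hrest : θ * ∑ r, weightedPairing (I r \ G) c (W r) ≤
      ∑ i ∈ A \ G, interiorWeight A i * |c i| * mergedWeight θ A I W i :=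
    calc θ * ∑ r, weightedPairing (I r \ G) c (W r)
        = θ * ∑ i ∈ A \ G, ∑ r ∈ hits I i, interiorWeight (I r \ G) i * |c i| * W r i := by
          rw [← sum_sum_inter_eq_sum_sum_hits]
          refine congrArg (θ * ·) (sum_congr rfl fun r _ => sum_congr ?_ fun _ _ => rfl)
          rw [← inter_sdiff_assoc, inter_eq_left.2 (hIA r)]
      _ ≤ θ * ∑ i ∈ A \ G, interiorWeight A i * |c i| * (hits I i).fold max 0 (W · i) := by
          gcongr with i hi
          exact sum_hits_interiorWeight_mul_le hI hIA hW c hi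
      _ = ∑ i ∈ A \ G, interiorWeight A i * |c i| * mergedWeight θ A I W i := by
          rw [mul_sum]
          refine sum_congr rfl fun i hi => ?_
          rw [mergedWeight, if_neg (mem_sdiff.1 hi).2]
          ring
  rw [weightedPairing, ← sum_inter_add_sum_sdiff A G, hsolo, add_comm]
  exact add_le_add le_rfl hrest

theorem mul_sum_dualNorm_add_le (hθ0 : 0 ≤ θ) (hθ1 : θ ≤ 1) (hq : 0 < q)
    (hθq : θ ^ q = (d : ℝ)⁻¹) (hmd : m ≤ d) (hI : IsStaircase I) (hIA : ∀ r, I r ⊆ A)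
    (c : ι → ℝ) :
    θ * ∑ r, dualNorm d q (I r \ soloIndices A I) c + ∑ i ∈ soloIndices A I, |c i| ≤
      dualNorm d q A c := by
  refine le_of_forall_pos_le_add fun ε hε => ?_
  have hε' : 0 < ε / (m + 1) := by positivity
  choose W hW hle using fun r =>
    exists_mem_dualBall_dualNorm_le (d := d) (A := I r \ soloIndices A I) (c := c) hq.ne' hε'
  have hslack : θ * (m * (ε / (m + 1))) ≤ ε :=
    calc θ * (m * (ε / (m + 1))) ≤ 1 * ((m + 1) * (ε / (m + 1))) := by
          gcongr
          exact le_add_of_nonneg_right zero_le_one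
      _ = ε := by field_simp
  calc θ * ∑ r, dualNorm d q (I r \ soloIndices A I) c + ∑ i ∈ soloIndices A I, |c i|
      ≤ θ * ∑ r, (weightedPairing (I r \ soloIndices A I) c (W r) + ε / (m + 1)) +
          ∑ i ∈ soloIndices A I, |c i| := by
        gcongr with r
        exact hle r
    _ = (θ * ∑ r, weightedPairing (I r \ soloIndices A I) c (W r) +
          ∑ i ∈ soloIndices A I, |c i|) + θ * (m * (ε / (m + 1))) := by
        rw [sum_add_distrib, sum_const, card_univ, Fintype.card_fin, nsmul_eq_mul]
        ring
    _ ≤ dualNorm d q A c + ε :=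
        add_le_add ((mul_sum_weightedPairing_add_le hθ0 hI hIA (fun r i => ((hW r).1 i).1) c).trans
          (weightedPairing_le_dualNorm (mergedWeight_mem_dualBall hθ0 hθ1 hq hθq hmd hIA hW)))
          hslack

end Merge

section Blocks

variable {k d m : ℕ} {θ : ℝ} {ι : Type*}

noncomputable def touching (E : Fin m → Finset (Vec k)) (u : ι → Vec k →₀ ℝ) (A : Finset ι)
    (r : Fin m) : Finset ι :=
  {i ∈ A | restrict (E r) (u i) ≠ 0}

theorem restrict_sum_smul_eq_sum_touching (E : Fin m → Finset (Vec k)) (u : ι → Vec k →₀ ℝ)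
    (A : Finset ι) (c : ι → ℝ) (r : Fin m) :
    restrict (E r) (∑ i ∈ A, c i • u i) = ∑ i ∈ touching E u A r, c i • restrict (E r) (u i) := by
  rw [restrict_sum, touching, sum_filter_of_ne fun i _ h => right_ne_zero_of_smul h]
  exact sum_congr rfl fun i _ => restrict_smul _ _ _

variable [LinearOrder ι]

def IsBlock (A : Finset ι) (u : ι → Vec k →₀ ℝ) : Prop :=
  ∀ i ∈ A, ∀ i' ∈ A, i < i' → Successive (u i).support (u i').support

variable {A : Finset ι} {u : ι → Vec k →₀ ℝ}

theorem IsBlock.mono (hu : IsBlock A u) {B : Finset ι} (hBA : B ⊆ A) : IsBlock B u :=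
  fun i hi i' hi' h => hu i (hBA hi) i' (hBA hi') h

theorem IsBlock.restrict (hu : IsBlock A u) (F : Finset (Vec k)) :
    IsBlock A fun i => restrict F (u i) :=
  fun i hi i' hi' h v hv v' hv' =>
    hu i hi i' hi' h v (support_restrict_subset F _ hv) v' (support_restrict_subset F _ hv')

theorem IsBlock.apply_eq_zero (hu : IsBlock A u) {i i' : ι} (hi : i ∈ A) (hi' : i' ∈ A)
    (hne : i' ≠ i) {v : Vec k} (hv : u i v ≠ 0) : u i' v = 0 := by
  by_contra! hv'
  rw [← Finsupp.mem_support_iff] at hv hv'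
  rcases lt_or_gt_of_ne hne with h | h
  · exact prec_irrefl _ (hu i' hi' i hi h v hv' v hv)
  · exact prec_irrefl _ (hu i hi i' hi' h v hv v hv')

theorem IsBlock.isStaircase_touching (hu : IsBlock A u) {E : Fin m → Finset (Vec k)}
    (hE : Admissible k d E) : IsStaircase (touching E u A) := by
  intro r s hrs i hi i' hi'
  simp only [touching, mem_filter] at hi hi'
  by_contra! hlt
  obtain ⟨v, hvE, hv⟩ := exists_mem_apply_ne_zero_of_restrict_ne_zero hi.2
  obtain ⟨v', hv'E, hv'⟩ := exists_mem_apply_ne_zero_of_restrict_ne_zero hi'.2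
  exact prec_asymm (hE.2.2 r s hrs v hvE v' hv'E)
    (hu i' hi'.1 i hi.1 hlt v' (Finsupp.mem_support_iff.2 hv') v (Finsupp.mem_support_iff.2 hv))

theorem normSeq_sum_smul_le (hθ0 : 0 ≤ θ) (hθ1 : θ ≤ 1) (j : ℕ) (I G : Finset ι) (c : ι → ℝ)
    (y : ι → Vec k →₀ ℝ) :
    normSeq k d θ j (∑ i ∈ I, c i • y i) ≤
      normSeq k d θ j (∑ i ∈ I \ G, c i • y i) + ∑ i ∈ I ∩ G, |c i| * normSeq k d θ j (y i) := by
  rw [← sum_inter_add_sum_sdiff I G]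
  refine (normSeq_add_le hθ0 hθ1 j _ _).trans ?_
  rw [add_comm]
  exact add_le_add le_rfl <| (normSeq_sum_le hθ0 hθ1 j _ _).trans
    (sum_le_sum fun i _ => normSeq_smul_le hθ0 hθ1 j _ _)

end Blocks

section MainEstimate

variable {k d m : ℕ} {θ q : ℝ} {ι : Type*} [LinearOrder ι]

theorem normSeq_zero_sum_le_dualNorm (hθ0 : 0 ≤ θ) (hθ1 : θ ≤ 1) (hq : q ≠ 0) (hd : 1 ≤ d)
    (c : ι → ℝ) {A : Finset ι} {u : ι → Vec k →₀ ℝ} (hu : ∀ i ∈ A, tnorm k d θ (u i) ≤ 1)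
    (hblock : IsBlock A u) :
    normSeq k d θ 0 (∑ i ∈ A, c i • u i) ≤ dualNorm d q A c := by
  refine Real.iSup_le (fun v => ?_) (dualNorm_nonneg hq)
  simp only [Finsupp.finsetSum_apply, Finsupp.smul_apply, smul_eq_mul]
  by_cases h : ∃ i ∈ A, u i v ≠ 0
  · obtain ⟨i, hi, hv⟩ := h
    rw [sum_eq_single_of_mem i hi fun i' hi' hne => by
      rw [hblock.apply_eq_zero hi hi' hne hv, mul_zero], abs_mul]
    exact (mul_le_of_le_one_right (abs_nonneg _)
      ((abs_apply_le_tnorm hθ0 hθ1 _ v).trans (hu i hi))).trans (abs_le_dualNorm hq hd hi)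
  · push Not at h
    rw [sum_eq_zero fun i hi => by rw [h i hi, mul_zero], abs_zero]
    exact dualNorm_nonneg hq

theorem mul_sum_normSeq_restrict_le_dualNorm (hθ0 : 0 ≤ θ) (hθ1 : θ ≤ 1) (hq : 0 < q)
    (hθq : θ ^ q = (d : ℝ)⁻¹) {j : ℕ} {c : ι → ℝ}
    (ih : ∀ (B : Finset ι) (v : ι → Vec k →₀ ℝ), (∀ i ∈ B, tnorm k d θ (v i) ≤ 1) →
      IsBlock B v → normSeq k d θ j (∑ i ∈ B, c i • v i) ≤ dualNorm d q B c)
    {A : Finset ι} {u : ι → Vec k →₀ ℝ} (hu : ∀ i ∈ A, tnorm k d θ (u i) ≤ 1)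
    (hblock : IsBlock A u) {E : Fin m → Finset (Vec k)} (hE : Admissible k d E) :
    θ * ∑ r, normSeq k d θ j (restrict (E r) (∑ i ∈ A, c i • u i)) ≤ dualNorm d q A c := by
  set I := touching E u A
  set G := soloIndices A I
  have hIA : ∀ r, I r ⊆ A := fun r => filter_subset _ _
  have hpiece : ∀ r, normSeq k d θ j (restrict (E r) (∑ i ∈ A, c i • u i)) ≤
      dualNorm d q (I r \ G) c + ∑ i ∈ I r ∩ G, |c i| * normSeq k d θ j (restrict (E r) (u i)) := by
    intro r
    rw [restrict_sum_smul_eq_sum_touching]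
    refine (normSeq_sum_smul_le hθ0 hθ1 j (I r) G c _).trans (add_le_add ?_ le_rfl)
    exact ih _ _
      (fun i hi => (tnorm_restrict_le hθ0 hθ1 _ _).trans (hu i (hIA r (sdiff_subset hi))))
      ((hblock.restrict _).mono (sdiff_subset.trans (hIA r)))
  have hsolo : θ * ∑ r, ∑ i ∈ I r ∩ G, |c i| * normSeq k d θ j (restrict (E r) (u i)) ≤
      ∑ i ∈ G, |c i| := by
    rw [sum_sum_inter_eq_sum_sum_hits, mul_sum]
    refine sum_le_sum fun i hi => ?_
    rw [← mul_sum, mul_left_comm]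
    refine mul_le_of_le_one_right (abs_nonneg _) ?_
    exact (mul_subfamily_sum_normSeq_restrict_le hθ0 hθ1 hE _ _).trans
      ((normSeq_le_tnorm hθ0 hθ1 _ _).trans (hu i (filter_subset _ _ hi)))
  calc θ * ∑ r, normSeq k d θ j (restrict (E r) (∑ i ∈ A, c i • u i))
      ≤ θ * ∑ r, (dualNorm d q (I r \ G) c +
          ∑ i ∈ I r ∩ G, |c i| * normSeq k d θ j (restrict (E r) (u i))) := by
        gcongr with r
        exact hpiece r
    _ = θ * ∑ r, dualNorm d q (I r \ G) c +
          θ * ∑ r, ∑ i ∈ I r ∩ G, |c i| * normSeq k d θ j (restrict (E r) (u i)) := by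
        rw [sum_add_distrib, mul_add]
    _ ≤ θ * ∑ r, dualNorm d q (I r \ G) c + ∑ i ∈ G, |c i| := add_le_add le_rfl hsolo
    _ ≤ dualNorm d q A c :=
        mul_sum_dualNorm_add_le hθ0 hθ1 hq hθq hE.1 (hblock.isStaircase_touching hE) hIA c

theorem normSeq_sum_le_dualNorm (hθ0 : 0 ≤ θ) (hθ1 : θ ≤ 1) (hq : 0 < q)
    (hθq : θ ^ q = (d : ℝ)⁻¹) (hd : 1 ≤ d) (c : ι → ℝ) (j : ℕ) :
    ∀ (A : Finset ι) (u : ι → Vec k →₀ ℝ), (∀ i ∈ A, tnorm k d θ (u i) ≤ 1) → IsBlock A u →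
      normSeq k d θ j (∑ i ∈ A, c i • u i) ≤ dualNorm d q A c := by
  induction j with
  | zero => exact fun A u hu hblock => normSeq_zero_sum_le_dualNorm hθ0 hθ1 hq.ne' hd c hu hblock
  | succ j ih =>
    exact fun A u hu hblock => normSeq_succ_le (ih A u hu hblock) fun m E _ hE =>
      mul_sum_normSeq_restrict_le_dualNorm hθ0 hθ1 hq hθq ih hu hblock hE

end MainEstimate

theorem eq_rpow_neg_inv_of_mul_eq_rpow {d θ p q : ℝ} (hpq : p.HolderConjugate q) (hd : 0 < d)
    (h : d * θ = d ^ (1 / p)) : θ = d ^ (-q⁻¹) := by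
  have hexp : 1 / p = 1 + -q⁻¹ := by
    rw [one_div, ← hpq.inv_add_inv_eq_one]
    ring
  rw [hexp, Real.rpow_add hd, Real.rpow_one] at h
  exact mul_left_cancel₀ hd.ne' h

theorem upper_lp_estimate_general (k d : ℕ) (hd : 2 ≤ d) (θ : ℝ) (hθ0 : 0 < θ) (hθ1 : θ < 1)
    (p : ℝ) (hp : 1 < p)
    (hdp : (d : ℝ) * θ = (d : ℝ) ^ (1 / p))
    (N : ℕ) (x : Fin N → (Vec k →₀ ℝ))
    (hxnorm : ∀ j, tnorm k d θ (x j) = 1)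
    (hblock : ∀ i j, i < j → ∀ w ∈ (x i).support, ∀ w' ∈ (x j).support, prec w.1 w'.1)
    (a : Fin N → ℝ) :
    tnorm k d θ (∑ j, a j • x j) ≤ (2 / θ) * (∑ j, |a j| ^ p) ^ (1 / p) := by
  set q := p.conjExponent
  have hpq : p.HolderConjugate q := .conjExponent hp
  have hd0 : (0 : ℝ) < d := by exact_mod_cast (by omega : 0 < d)
  have hθd : θ = (d : ℝ) ^ (-q⁻¹) := eq_rpow_neg_inv_of_mul_eq_rpow hpq hd0 hdp
  have hθq : θ ^ q = (d : ℝ)⁻¹ := by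
    rw [hθd, ← Real.rpow_mul hd0.le, neg_mul, inv_mul_cancel₀ hpq.symm.ne_zero, Real.rpow_neg_one]
  have hdq : (d : ℝ) ^ (1 / q) = θ⁻¹ := by rw [hθd, Real.rpow_neg hd0.le, inv_inv, one_div]
  calc tnorm k d θ (∑ j, a j • x j) ≤ dualNorm d q univ a :=
        ciSup_le fun j => normSeq_sum_le_dualNorm hθ0.le hθ1.le hpq.symm.pos hθq (by omega) a j
          univ x (fun i _ => (hxnorm i).le) fun i _ i' _ h => hblock i i' h
    _ ≤ 2 * (d : ℝ) ^ (1 / q) * (∑ j, |a j| ^ p) ^ (1 / p) := dualNorm_le hpq univ a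
    _ = (2 / θ) * (∑ j, |a j| ^ p) ^ (1 / p) := by rw [hdq, ← div_eq_mul_inv]

/-- upper `ℓ_p`-estimate for any finite normalized block basis:
`‖∑ a_j x_j‖ ≤ (2/θ)(∑ |a_j|^p)^{1/p}`, where `dθ = d^{1/p}`. -/
theorem upper_lp_estimate (k d : ℕ) (hd : 2 ≤ d) (θ : ℝ) (hθ0 : 0 < θ) (hθ1 : θ < 1)
    (hdθ : 1 < (d : ℝ) * θ) (p : ℝ) (hp : 1 < p)
    (hdp : (d : ℝ) * θ = (d : ℝ) ^ (1 / p))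
    (N : ℕ) (x : Fin N → (Vec k →₀ ℝ))
    (hxnorm : ∀ j, tnorm k d θ (x j) = 1)
    (hblock : ∀ i j, i < j → ∀ w ∈ (x i).support, ∀ w' ∈ (x j).support, prec w.1 w'.1)
    (a : Fin N → ℝ) :
    tnorm k d θ (∑ j, a j • x j) ≤ (2 / θ) * (∑ j, |a j| ^ p) ^ (1 / p) :=
  upper_lp_estimate_general k d hd θ hθ0 hθ1 p hp hdp N x hxnorm hblock a
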